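/- arXiv:2402.01288 — 2 statements merged into one kernel-verified Lean document; each statement's English description precedes it below -/
import Mathlib

section
/- The series Σ_{p=1}^∞ 1/((2p+1)²(2p-1)²) equals (π² - 8)/16. -/
open Real Filter Topology

/-!
Since the two factors differ by `2`, `1/a - 1/(a+2) = 2/(a(a+2))`, and squaring this gives
`1/(a(a+2))² = (1/a² + 1/(a+2)² - (1/a - 1/(a+2)))/4`. The series therefore splits into the sum
`π²/8` of reciprocal odd squares (the odd part of `ζ(2) = π²/6`), the same sum without its first
term, and a telescoping series with sum `1`.
-/

lemma one_div_sq_mul_sq_eq {K : Type*} [Field K] [CharZero K] {a : K} (ha : a ≠ 0)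
    (ha₂ : a + 2 ≠ 0) :
    1 / ((a + 2) ^ 2 * a ^ 2) = (1 / a ^ 2 + 1 / (a + 2) ^ 2 - (1 / a - 1 / (a + 2))) / 4 := by
  field_simp
  ring

lemma hasSum_sub_succ_of_antitone {f : ℕ → ℝ} {l : ℝ} (hf : Antitone f)
    (hl : Tendsto f atTop (𝓝 l)) : HasSum (fun n ↦ f n - f (n + 1)) (f 0 - l) := by
  rw [hasSum_iff_tendsto_nat_of_nonneg fun n ↦ sub_nonneg.2 (hf n.le_succ)]
  simp_rw [Finset.sum_range_sub']
  exact tendsto_const_nhds.sub hl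

lemma hasSum_one_div_even_sq : HasSum (fun k : ℕ ↦ 1 / ((2 * k : ℕ) : ℝ) ^ 2) (π ^ 2 / 24) := by
  have h : (fun k : ℕ ↦ 1 / ((2 * k : ℕ) : ℝ) ^ 2) = fun k : ℕ ↦ 1 / (k : ℝ) ^ 2 / 4 := by
    ext k
    push_cast
    ring
  rw [h, show π ^ 2 / 24 = π ^ 2 / 6 / 4 by ring]
  exact hasSum_zeta_two.div_const 4

lemma hasSum_one_div_odd_sq : HasSum (fun k : ℕ ↦ 1 / (2 * (k : ℝ) + 1) ^ 2) (π ^ 2 / 8) := by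
  have hodd : Summable fun k : ℕ ↦ 1 / ((2 * k + 1 : ℕ) : ℝ) ^ 2 :=
    hasSum_zeta_two.summable.comp_injective fun a b h ↦ by simpa using h
  have hsplit := hasSum_zeta_two.unique
    (HasSum.even_add_odd (f := fun n : ℕ ↦ 1 / (n : ℝ) ^ 2) hasSum_one_div_even_sq hodd.hasSum)
  have h := hodd.hasSum
  rw [show ∑' k : ℕ, 1 / ((2 * k + 1 : ℕ) : ℝ) ^ 2 = π ^ 2 / 8 by linarith] at h
  exact_mod_cast h

lemma hasSum_one_div_odd_sq_succ :
    HasSum (fun k : ℕ ↦ 1 / (2 * (k : ℝ) + 3) ^ 2) (π ^ 2 / 8 - 1) := by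
  have h := (hasSum_nat_add_iff' 1).2 hasSum_one_div_odd_sq
  have hshift : (fun k : ℕ ↦ 1 / (2 * ((k + 1 : ℕ) : ℝ) + 1) ^ 2) =
      fun k : ℕ ↦ 1 / (2 * (k : ℝ) + 3) ^ 2 := by
    ext k
    push_cast
    ring
  rw [hshift] at h
  simpa using h

lemma hasSum_one_div_odd_sub_succ :
    HasSum (fun k : ℕ ↦ 1 / (2 * (k : ℝ) + 1) - 1 / (2 * (k : ℝ) + 3)) 1 := by
  have hanti : Antitone fun k : ℕ ↦ 1 / (2 * (k : ℝ) + 1) := fun m n hmn ↦ by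
    dsimp only
    gcongr
  have hlim : Tendsto (fun k : ℕ ↦ 1 / (2 * (k : ℝ) + 1)) atTop (𝓝 0) := by
    simpa [Function.comp_def] using
      (tendsto_one_div_add_atTop_nhds_zero_nat (𝕜 := ℝ)).comp (tendsto_id.const_mul_atTop' two_pos)
  convert hasSum_sub_succ_of_antitone hanti hlim using 1
  · ext k
    push_cast
    ring
  · norm_num

/-- The summation index `p : ℕ` stands for the paper's `p + 1 ≥ 1`. -/
theorem stmt_10 :
    ∑' p : ℕ, (1 : ℝ) / ((2 * (p : ℝ) + 3) ^ 2 * (2 * (p : ℝ) + 1) ^ 2)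
      = (π ^ 2 - 8) / 16 := by
  have h := ((hasSum_one_div_odd_sq.add hasSum_one_div_odd_sq_succ).sub
    hasSum_one_div_odd_sub_succ).div_const 4
  have hterm (p : ℕ) : (1 : ℝ) / ((2 * (p : ℝ) + 3) ^ 2 * (2 * (p : ℝ) + 1) ^ 2) =
      (1 / (2 * (p : ℝ) + 1) ^ 2 + 1 / (2 * (p : ℝ) + 3) ^ 2
        - (1 / (2 * (p : ℝ) + 1) - 1 / (2 * (p : ℝ) + 3))) / 4 := by
    have h := one_div_sq_mul_sq_eq (a := 2 * (p : ℝ) + 1) (by positivity) (by positivity)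
    rwa [show 2 * (p : ℝ) + 1 + 2 = 2 * p + 3 by ring] at h
  simp_rw [hterm, h.tsum_eq]
  ring
end

section
/- Let M ∈ ℝ^{n×m} and let v ∈ ℝ^m be a unit vector attaining ‖Mv‖₂ = ‖M‖₂ (a right singular vector for the maximal singular value). Let v_abs ∈ ℝ₊^m be the vector with entries |v_i|. Then the nonnegative induced norm ‖M‖_{2+} := max{ |Mx|₂ : x ∈ ℝ₊^m, |x|₂ = 1 } satisfies ‖M‖_{2+} ≥ (1/√2) · √(‖M‖₂² + |M v_abs|₂²). -/
/-!
Both `|v| + v` and `|v| - v` are nonnegative, so each has image norm at most `‖M‖_{2+}` times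
its own norm. Adding the squares of the two bounds and applying the parallelogram law on both
sides (with `|v|` and `v` unit vectors and `|Mv|₂ = ‖M‖₂`) gives
`2 (‖M‖₂² + |M v_abs|₂²) ≤ 4 ‖M‖_{2+}²`.
-/

open Matrix

/-- The spectral norm (maximal singular value) of a real matrix, i.e. the operator
norm of the induced map between Euclidean spaces. -/
noncomputable def specNorm {n m : ℕ} (M : Matrix (Fin n) (Fin m) ℝ) : ℝ :=
  ‖LinearMap.toContinuousLinearMap (Matrix.toEuclideanLin M)‖

/-- The nonnegative-input induced norm `‖M‖_{2+} = sup {|Mx|₂ : x ≥ 0, |x|₂ = 1}`. -/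
noncomputable def posNorm {n m : ℕ} (M : Matrix (Fin n) (Fin m) ℝ) : ℝ :=
  sSup {c : ℝ | ∃ x : EuclideanSpace ℝ (Fin m),
    (∀ i, 0 ≤ x i) ∧ ‖x‖ = 1 ∧ c = ‖Matrix.toEuclideanLin M x‖}

section PosNorm

variable {n m : ℕ} (M : Matrix (Fin n) (Fin m) ℝ)

lemma posNorm_nonneg : 0 ≤ posNorm M :=
  Real.sSup_nonneg fun _ ⟨_, _, _, hc⟩ => hc ▸ norm_nonneg _

lemma bddAbove_posNorm_set : BddAbove {c : ℝ | ∃ x : EuclideanSpace ℝ (Fin m),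
    (∀ i, 0 ≤ x i) ∧ ‖x‖ = 1 ∧ c = ‖Matrix.toEuclideanLin M x‖} := by
  refine ⟨specNorm M, ?_⟩
  rintro c ⟨x, -, hx, rfl⟩
  simpa [specNorm, hx] using (LinearMap.toContinuousLinearMap (toEuclideanLin M)).le_opNorm x

lemma norm_toEuclideanLin_le_posNorm_mul {w : EuclideanSpace ℝ (Fin m)} (hw : ∀ i, 0 ≤ w i) :
    ‖toEuclideanLin M w‖ ≤ posNorm M * ‖w‖ := by
  rcases eq_or_ne w 0 with rfl | hw0
  · simp
  have hpos : 0 < ‖w‖ := norm_pos_iff.mpr hw0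
  have hunit : ‖toEuclideanLin M (‖w‖⁻¹ • w)‖ ≤ posNorm M :=
    le_csSup (bddAbove_posNorm_set M)
      ⟨‖w‖⁻¹ • w, fun i => mul_nonneg (inv_nonneg.mpr hpos.le) (hw i),
        norm_smul_inv_norm hw0, rfl⟩
  rw [map_smul, norm_smul, norm_inv, norm_norm, inv_mul_le_iff₀ hpos] at hunit
  linarith

end PosNorm

lemma EuclideanSpace.norm_toLp_abs {ι : Type*} [Fintype ι] (v : EuclideanSpace ℝ ι) :
    ‖(WithLp.toLp 2 (fun i => |v i|) : EuclideanSpace ℝ ι)‖ = ‖v‖ := by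
  simp [EuclideanSpace.norm_eq]

lemma one_div_sqrt_two_mul_sqrt_le {a P : ℝ} (hP : 0 ≤ P) (h : a ≤ 2 * P ^ 2) :
    1 / √2 * √a ≤ P := by
  rw [one_div_mul_eq_div, ← Real.sqrt_div' _ zero_le_two, Real.sqrt_le_left hP]
  linarith

/-- If `v` is a unit right singular vector of `M` for its maximal singular value,
and `v_abs` is its entrywise absolute value, then
`‖M‖_{2+} ≥ (1/√2) √(‖M‖₂² + |M v_abs|₂²)`. -/
theorem stmt_11 {n m : ℕ} (M : Matrix (Fin n) (Fin m) ℝ)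
    (v : EuclideanSpace ℝ (Fin m)) (hv : ‖v‖ = 1)
    (hmax : ‖Matrix.toEuclideanLin M v‖ = specNorm M) :
    (1 / Real.sqrt 2) *
        Real.sqrt (specNorm M ^ 2 +
          ‖Matrix.toEuclideanLin M (WithLp.toLp 2 (fun i => |v i|) : EuclideanSpace ℝ (Fin m))‖ ^ 2)
      ≤ posNorm M := by
  set L := toEuclideanLin M
  set va : EuclideanSpace ℝ (Fin m) := WithLp.toLp 2 (fun i => |v i|)
  have hva : ‖va‖ = 1 := (EuclideanSpace.norm_toLp_abs v).trans hv
  have hplus : ‖L (va + v)‖ ≤ posNorm M * ‖va + v‖ :=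
    norm_toEuclideanLin_le_posNorm_mul M fun i => by simp only [PiLp.add_apply, va]; linarith [neg_abs_le (v i)]
  have hminus : ‖L (va - v)‖ ≤ posNorm M * ‖va - v‖ :=
    norm_toEuclideanLin_le_posNorm_mul M fun i => by simp [va, le_abs_self]
  have hdom := parallelogram_law_with_norm ℝ va v
  have himg := parallelogram_law_with_norm ℝ (L va) (L v)
  rw [← map_add, ← map_sub, hmax] at himg
  rw [hva, hv] at hdom
  refine one_div_sqrt_two_mul_sqrt_le (posNorm_nonneg M) ?_
  nlinarith [mul_self_le_mul_self (norm_nonneg _) hplus, mul_self_le_mul_self (norm_nonneg _) hminus]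
end
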